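/- arXiv:0903.5069 — 4 statements merged into one kernel-verified Lean document; each statement's English description precedes it below -/
import Mathlib

section
/- Let V = V₀²V₁ with V₀, V₁ ∈ ℂ[q₁,…,qₙ], V₀ non-constant, and suppose there exists d ∈ ℂⁿ with V₀(d) = 0, V₁(d) ≠ 0, and Σᵢ (∂V₀/∂qᵢ(d))² ≠ 0. Then the Hessian matrix V''(d) is not nilpotent: it has the nonzero eigenvalue 2V₁(d)·Σᵢ(∂ᵢV₀(d))². -/
open MvPolynomial Matrix

theorem stmt_4 {n : ℕ} (V V₀ V₁ : MvPolynomial (Fin n) ℂ)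
    (hV : V = V₀ ^ 2 * V₁) (h0 : V₀.totalDegree ≠ 0)
    (d : Fin n → ℂ) (hd0 : eval d V₀ = 0) (hd1 : eval d V₁ ≠ 0)
    (hgrad : ∑ i, (eval d (pderiv i V₀)) ^ 2 ≠ 0) :
    ¬ IsNilpotent (Matrix.of fun i j => eval d (pderiv i (pderiv j V))) ∧
    ∃ v : Fin n → ℂ, v ≠ 0 ∧
      (Matrix.of fun i j => eval d (pderiv i (pderiv j V))) *ᵥ v
        = (2 * eval d V₁ * ∑ i, (eval d (pderiv i V₀)) ^ 2) • v := by
  set g : Fin n → ℂ := fun i => eval d (pderiv i V₀) with hg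
  set H : Matrix (Fin n) (Fin n) ℂ :=
    Matrix.of fun i j => eval d (pderiv i (pderiv j V)) with hH
  set lam : ℂ := 2 * eval d V₁ * ∑ i, g i ^ 2 with hlam
  have hlamne : lam ≠ 0 := by
    exact mul_ne_zero (mul_ne_zero two_ne_zero hd1) hgrad
  have hgne : g ≠ 0 := by
    intro h
    apply hgrad
    refine Finset.sum_eq_zero fun i _ => ?_
    rw [show eval d (pderiv i V₀) = g i from rfl, congrFun h i]
    simp
  have key : ∀ i j, H i j = 2 * eval d V₁ * g i * g j := by
    intro i j
    simp [hH, hV, pderiv_mul, pderiv_pow, hd0]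
    ring
  have heig : H *ᵥ g = lam • g := by
    funext i
    simp only [mulVec, dotProduct, Pi.smul_apply, smul_eq_mul, hlam]
    rw [Finset.sum_congr rfl (fun j _ => by rw [key i j]), Finset.mul_sum, Finset.sum_mul]
    exact Finset.sum_congr rfl fun j _ => by ring
  have hpow : ∀ k : ℕ, (H ^ k) *ᵥ g = lam ^ k • g := by
    intro k
    induction k with
    | zero => simp
    | succ k ih =>
        rw [pow_succ', pow_succ', ← mulVec_mulVec, ih, mulVec_smul, heig,
          smul_smul, mul_comm]
  constructor
  · rintro ⟨k, hk⟩
    have := hpow k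
    rw [hk] at this
    simp only [zero_mulVec] at this
    exact hgne (by
      have h2 : lam ^ k ≠ 0 := pow_ne_zero _ hlamne
      funext i
      have := congrFun this.symm i
      simpa [h2] using this)
  · exact ⟨g, hgne, heig⟩
end

section
/- The polynomial V = q₁q₂(q₂ − i q₃) ∈ ℂ[q₁,q₂,q₃] has exactly three Darboux points in ℂP², namely [0:0:1], [1:0:0] and [0:i:1], and all three are improper, i.e. ∇V vanishes at each of them. -/
open MvPolynomial

theorem stmt_9 (V : MvPolynomial (Fin 3) ℂ)
    (hV : V = X 0 * X 1 * (X 1 - C Complex.I * X 2)) :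
    ∀ d : Fin 3 → ℂ, d ≠ 0 →
      (((∀ i j, d i * eval d (pderiv j V) = d j * eval d (pderiv i V)) ↔
        ∃ c : ℂ, d = c • ![0, 0, 1] ∨ d = c • ![1, 0, 0] ∨ d = c • ![0, Complex.I, 1]) ∧
       ((∀ i j, d i * eval d (pderiv j V) = d j * eval d (pderiv i V)) →
         ∀ i, eval d (pderiv i V) = 0)) := by
  intro d _hd
  have g0 : eval d (pderiv 0 V) = d 1 * (d 1 - Complex.I * d 2) := by
    subst hV; simp [pderiv_mul, pderiv_X]; ring
  have g1 : eval d (pderiv 1 V) = d 0 * (2 * d 1 - Complex.I * d 2) := by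
    subst hV; simp [pderiv_mul, pderiv_X]; ring
  have g2 : eval d (pderiv 2 V) = -Complex.I * (d 0 * d 1) := by
    subst hV; simp [pderiv_mul, pderiv_X]; ring
  -- forward direction
  have key : (∀ i j, d i * eval d (pderiv j V) = d j * eval d (pderiv i V)) →
      ∃ c : ℂ, d = c • ![0, 0, 1] ∨ d = c • ![1, 0, 0] ∨ d = c • ![0, Complex.I, 1] := by
    intro H
    have e01 := H 0 1
    have e12 := H 1 2
    rw [g0, g1] at e01
    rw [g1, g2] at e12
    by_cases ha : d 0 = 0
    · by_cases hb : d 1 = 0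
      · exact ⟨d 2, Or.inl (by funext i; fin_cases i <;> simp [ha, hb])⟩
      · have hbc : d 1 - Complex.I * d 2 = 0 := by
          have h' : d 1 * (d 1 * (d 1 - Complex.I * d 2)) = 0 := by
            linear_combination (-1 : ℂ) * e01 + (d 0 * (2 * d 1 - Complex.I * d 2)) * ha
          rcases mul_eq_zero.1 h' with h | h
          · exact absurd h hb
          · rcases mul_eq_zero.1 h with h | h
            · exact absurd h hb
            · exact h
        have hb' : d 1 = Complex.I * d 2 := sub_eq_zero.1 hbc
        refine ⟨d 2, Or.inr (Or.inr ?_)⟩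
        funext i; fin_cases i
        · simpa using ha
        · simpa using by rw [hb']; ring
        · simp
    · have hsq : d 0 * (d 1 - Complex.I * d 2) ^ 2 = 0 := by
        linear_combination Complex.I * e12 + (d 0 * d 1 ^ 2) * Complex.I_sq
      have hbc : d 1 = Complex.I * d 2 := by
        rcases mul_eq_zero.1 hsq with h | h
        · exact absurd h ha
        · exact sub_eq_zero.1 (pow_eq_zero_iff two_ne_zero |>.1 h)
      have hc : d 2 = 0 := by
        have h' : d 0 * (d 0 * (Complex.I * d 2)) = 0 := by
          linear_combination e01 + (d 1 ^ 2 - 2 * d 0 ^ 2) * hbc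
        rcases mul_eq_zero.1 h' with h | h
        · exact absurd h ha
        · rcases mul_eq_zero.1 h with h | h
          · exact absurd h ha
          · rcases mul_eq_zero.1 h with h | h
            · exact absurd h Complex.I_ne_zero
            · exact h
      have hb : d 1 = 0 := by rw [hbc, hc, mul_zero]
      exact ⟨d 0, Or.inr (Or.inl (by funext i; fin_cases i <;> simp [hb, hc]))⟩
  have back : (∃ c : ℂ, d = c • ![0, 0, 1] ∨ d = c • ![1, 0, 0] ∨ d = c • ![0, Complex.I, 1]) →
      ∀ i, eval d (pderiv i V) = 0 := by
    rintro ⟨c, h | h | h⟩ i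
    · have h0 : d 0 = 0 := by rw [h]; simp
      have h1 : d 1 = 0 := by rw [h]; simp
      have z0 : eval d (pderiv 0 V) = 0 := by rw [g0, h1]; ring
      have z1 : eval d (pderiv 1 V) = 0 := by rw [g1, h0]; ring
      have z2 : eval d (pderiv 2 V) = 0 := by rw [g2, h0]; ring
      fin_cases i
      · exact z0
      · exact z1
      · exact z2
    · have h1 : d 1 = 0 := by rw [h]; simp
      have h2 : d 2 = 0 := by rw [h]; simp
      have z0 : eval d (pderiv 0 V) = 0 := by rw [g0, h1]; ring
      have z1 : eval d (pderiv 1 V) = 0 := by rw [g1, h1, h2]; ring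
      have z2 : eval d (pderiv 2 V) = 0 := by rw [g2, h1]; ring
      fin_cases i
      · exact z0
      · exact z1
      · exact z2
    · have h0 : d 0 = 0 := by rw [h]; simp
      have h1 : d 1 = Complex.I * d 2 := by rw [h]; simp; ring
      have z0 : eval d (pderiv 0 V) = 0 := by rw [g0, h1]; ring
      have z1 : eval d (pderiv 1 V) = 0 := by rw [g1, h0]; ring
      have z2 : eval d (pderiv 2 V) = 0 := by rw [g2, h0]; ring
      fin_cases i
      · exact z0
      · exact z1
      · exact z2
  refine ⟨⟨key, fun hex i j => ?_⟩, fun h i => back (key h) i⟩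
  have hz := back hex
  rw [hz i, hz j, mul_zero, mul_zero]
end

section
/- For every λ, a₄, a₅ ∈ ℂ, the function I₀ = 3(p₂ − i p₃)² + (q₂ − i q₃)³ is a first integral of the Hamiltonian H = ½(p₁²+p₂²+p₃²) + V_λ, where V_λ = ¼(q₂ − i q₃)[λq₁² + 2(q₂ − i q₃)(2a₄q₁ + 2a₅(q₂ − i q₃) + i q₃)]. -/
set_option maxRecDepth 8000
set_option maxHeartbeats 1600000


open MvPolynomial

/-- Poisson bracket on ℂ⁶ with coordinates (q₁,q₂,q₃,p₁,p₂,p₃) = (X 0,…,X 5). -/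
noncomputable def poissonBracket (F G : MvPolynomial (Fin 6) ℂ) : MvPolynomial (Fin 6) ℂ :=
  (pderiv 0 F * pderiv 3 G - pderiv 3 F * pderiv 0 G)
  + (pderiv 1 F * pderiv 4 G - pderiv 4 F * pderiv 1 G)
  + (pderiv 2 F * pderiv 5 G - pderiv 5 F * pderiv 2 G)

theorem stmt_13 (lam a₄ a₅ : ℂ) (V H I₀ : MvPolynomial (Fin 6) ℂ)
    (hV : V = C (1/4 : ℂ) * (X 1 - C Complex.I * X 2) *
      (C lam * X 0 ^ 2 + C (2 : ℂ) * (X 1 - C Complex.I * X 2) *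
        (C (2 * a₄) * X 0 + C (2 * a₅) * (X 1 - C Complex.I * X 2) + C Complex.I * X 2)))
    (hH : H = C (1/2 : ℂ) * (X 3 ^ 2 + X 4 ^ 2 + X 5 ^ 2) + V)
    (hI : I₀ = C (3 : ℂ) * (X 4 - C Complex.I * X 5) ^ 2 + (X 1 - C Complex.I * X 2) ^ 3) :
    poissonBracket H I₀ = 0 := by
  have hnum : ∀ (i : Fin 6) (n : ℕ) [n.AtLeastTwo],
      pderiv i (OfNat.ofNat n : MvPolynomial (Fin 6) ℂ) = 0 := by
    intro i n _
    rw [← map_ofNat (C : ℂ →+* MvPolynomial (Fin 6) ℂ) n, pderiv_C]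
  subst hV hH hI
  apply MvPolynomial.funext
  intro x
  simp only [poissonBracket, hnum, map_add, map_mul, map_sub, map_pow, Derivation.leibniz,
    Derivation.leibniz_pow, pderiv_X, pderiv_C, smul_eq_mul, map_zero, map_one,
    eval_C, eval_X, Pi.single_apply, Fin.isValue, apply_ite (eval x), eval_zero,
    nsmul_eq_mul, map_neg, map_ofNat, Nat.cast_ofNat, Nat.reduceSub, pow_one]
  simp (config := { maxSteps := 10000000 }) only [Fin.reduceEq, reduceIte,
    mul_zero, zero_mul, mul_one, one_mul, add_zero, zero_add, sub_zero, zero_sub]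
  set w : ℂ := x 1 - Complex.I * x 2 with hw
  set u : ℂ := x 4 - Complex.I * x 5 with hu
  set S : ℂ := 2 * a₄ * x 0 + 2 * a₅ * w + Complex.I * x 2 with hS
  set A : ℂ := lam * x 0 ^ 2 + 2 * w * S with hA
  linear_combination ((3/2 : ℂ) * u * (A + 2 * w * S + 4 * a₅ * w ^ 2) - 3 * u * w ^ 2) * Complex.I_sq
end

section
/- For the potential V = ¼(q₂ − i q₃)[q₁² + 2(q₂ − i q₃)(2a₅(q₂ − i q₃) + i q₃)] with a₅ ∈ ℂ, the two functions I₁ = p₂q₁ − p₁q₂ + i(p₁q₃ − p₃q₁) and I₂ = 3(p₂ − ip₃)² + (q₂ − iq₃)³ are first integrals of H = ½|p|² + V and moreover {I₁, I₂} = 0. -/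
open MvPolynomial

lemma pdX (i j : Fin 6) :
    pderiv i (X j : MvPolynomial (Fin 6) ℂ) = if i = j then 1 else 0 := by
  rcases eq_or_ne i j with h | h
  · simp [h]
  · simp [h, pderiv_X_of_ne h.symm]

set_option maxHeartbeats 4000000 in
theorem stmt_14 (a₅ : ℂ) (V H I₁ I₂ : MvPolynomial (Fin 6) ℂ)
    (hV : V = C (1/4 : ℂ) * (X 1 - C Complex.I * X 2) *
      (X 0 ^ 2 + C (2 : ℂ) * (X 1 - C Complex.I * X 2) *
        (C (2 * a₅) * (X 1 - C Complex.I * X 2) + C Complex.I * X 2)))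
    (hH : H = C (1/2 : ℂ) * (X 3 ^ 2 + X 4 ^ 2 + X 5 ^ 2) + V)
    (hI₁ : I₁ = X 4 * X 0 - X 3 * X 1 + C Complex.I * (X 3 * X 2 - X 5 * X 0))
    (hI₂ : I₂ = C (3 : ℂ) * (X 4 - C Complex.I * X 5) ^ 2 + (X 1 - C Complex.I * X 2) ^ 3) :
    poissonBracket H I₁ = 0 ∧ poissonBracket H I₂ = 0 ∧ poissonBracket I₁ I₂ = 0 := by
  subst hV hH hI₁ hI₂
  refine ⟨?_, ?_, ?_⟩ <;>
  · unfold poissonBracket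
    simp only [map_add, map_sub, pderiv_mul, pderiv_pow, pdX, pderiv_C,
      Fin.isValue, Fin.reduceEq, if_true, if_false]
    apply MvPolynomial.funext
    intro x
    simp only [map_add, map_sub, map_mul, map_pow, eval_C, eval_X,
      map_one, map_zero, map_natCast]
    ring_nf
    simp only [Complex.I_sq, show Complex.I ^ 3 = -Complex.I by
        rw [pow_succ, Complex.I_sq]; ring,
      show Complex.I ^ 4 = 1 by
        rw [pow_succ, pow_succ, Complex.I_sq]; simp [Complex.I_mul_I],
      show Complex.I ^ 5 = Complex.I by
        rw [pow_succ, pow_succ, pow_succ, Complex.I_sq]; simp [Complex.I_mul_I],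
      show Complex.I ^ 6 = -1 by
        rw [pow_succ, pow_succ, pow_succ, pow_succ, Complex.I_sq]
        simp [Complex.I_mul_I]]
    ring
end
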